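/- Let T > 0 and η ∈ (0, 1). Then there exists a constant C > 0 such that for all t ∈ [0, T] and all r > 0: ∫₀^t ( sin(2π s r) / (2π r) )² ds ≤ C · t^{3 − 2η} · (1 + r²)^{−η}. -/

import Mathlib

open MeasureTheory Real
open scoped Real

/-! Writing `A(s) = (sin(2πsr)/(2πr))²`, we have `A ≤ s²` and `A ≤ (2πr)⁻²`, so
`A · (1 + r²) ≤ s² + 1`. Interpolating, `A = A^{1-η} A^η ≤ (s²)^{1-η} ((T² + 1)/(1 + r²))^η`
for `s ≤ T`, and integrating `s^{2-2η}` over `[0, t]` gives `t^{3-2η}/(3-2η)`. -/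

theorem le_rpow_mul_rpow_of_le_of_le {a b c θ : ℝ} (ha : 0 ≤ a) (hab : a ≤ b) (hac : a ≤ c)
    (hθ₀ : 0 ≤ θ) (hθ₁ : θ ≤ 1) : a ≤ b ^ (1 - θ) * c ^ θ :=
  calc a = a ^ (1 - θ) * a ^ θ := by
        rw [← rpow_add_of_nonneg ha (by linarith) hθ₀, sub_add_cancel, rpow_one]
    _ ≤ b ^ (1 - θ) * c ^ θ :=
        mul_le_mul (rpow_le_rpow ha hab (by linarith)) (rpow_le_rpow ha hac hθ₀)
          (rpow_nonneg ha _) (rpow_nonneg (ha.trans hab) _)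

theorem sq_sin_mul_div_le_sq (a s : ℝ) : (sin (a * s) / a) ^ 2 ≤ s ^ 2 := by
  rcases eq_or_ne a 0 with rfl | ha
  · simp [sq_nonneg]
  · rw [div_pow, div_le_iff₀ (by positivity), ← mul_pow, mul_comm s]
    exact sin_sq_le_sq

theorem sq_sin_div_mul_sq_le_one (x a : ℝ) : (sin x / a) ^ 2 * a ^ 2 ≤ 1 := by
  rcases eq_or_ne a 0 with rfl | ha
  · simp
  · rw [div_pow, div_mul_cancel₀ _ (by positivity)]
    exact sin_sq_le_one x

theorem sq_sin_wave_le_sq (s r : ℝ) : (sin (2 * π * s * r) / (2 * π * r)) ^ 2 ≤ s ^ 2 := by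
  simpa only [mul_right_comm _ s r] using sq_sin_mul_div_le_sq (2 * π * r) s

theorem sq_sin_wave_mul_one_add_sq_le (s r : ℝ) :
    (sin (2 * π * s * r) / (2 * π * r)) ^ 2 * (1 + r ^ 2) ≤ s ^ 2 + 1 := by
  have hπ : 1 ≤ (2 * π) ^ 2 := by nlinarith [pi_gt_three]
  have h_freq : (sin (2 * π * s * r) / (2 * π * r)) ^ 2 * r ^ 2 ≤ 1 :=
    calc (sin (2 * π * s * r) / (2 * π * r)) ^ 2 * r ^ 2
        ≤ (sin (2 * π * s * r) / (2 * π * r)) ^ 2 * r ^ 2 * (2 * π) ^ 2 :=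
          le_mul_of_one_le_right (by positivity) hπ
      _ = (sin (2 * π * s * r) / (2 * π * r)) ^ 2 * (2 * π * r) ^ 2 := by ring
      _ ≤ 1 := sq_sin_div_mul_sq_le_one _ _
  linarith [sq_sin_wave_le_sq s r]

theorem sq_sin_wave_le {T η s r : ℝ} (hη₀ : 0 ≤ η) (hη₁ : η ≤ 1) (hs₀ : 0 ≤ s) (hsT : s ≤ T) :
    (sin (2 * π * s * r) / (2 * π * r)) ^ 2
      ≤ (T ^ 2 + 1) ^ η * (1 + r ^ 2) ^ (-η) * s ^ (2 - 2 * η) := by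
  have hr : 0 < 1 + r ^ 2 := by positivity
  have h_freq : (sin (2 * π * s * r) / (2 * π * r)) ^ 2 ≤ (T ^ 2 + 1) / (1 + r ^ 2) := by
    rw [le_div_iff₀ hr]
    exact (sq_sin_wave_mul_one_add_sq_le s r).trans (by gcongr)
  calc (sin (2 * π * s * r) / (2 * π * r)) ^ 2
      ≤ (s ^ 2) ^ (1 - η) * ((T ^ 2 + 1) / (1 + r ^ 2)) ^ η :=
        le_rpow_mul_rpow_of_le_of_le (sq_nonneg _) (sq_sin_wave_le_sq s r) h_freq hη₀ hη₁
    _ = (T ^ 2 + 1) ^ η * (1 + r ^ 2) ^ (-η) * s ^ (2 - 2 * η) := by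
        rw [div_rpow (by positivity) hr.le, rpow_neg hr.le, ← rpow_natCast, ← rpow_mul hs₀]
        push_cast
        ring_nf

theorem integral_rpow_zero_left {p : ℝ} (hp : -1 < p) (t : ℝ) :
    ∫ s in (0 : ℝ)..t, s ^ p = t ^ (p + 1) / (p + 1) := by
  rw [integral_rpow (Or.inl hp), zero_rpow (by linarith), sub_zero]

theorem wave_fourier_pointwise_bound_general (T : ℝ)
    (η : ℝ) (hη : η ∈ Set.Ioo (0 : ℝ) 1) :
    ∃ C > (0 : ℝ), ∀ t ∈ Set.Icc (0 : ℝ) T, ∀ r : ℝ, 0 < r →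
      (∫ s in (0 : ℝ)..t, (Real.sin (2 * π * s * r) / (2 * π * r)) ^ 2)
        ≤ C * t ^ (3 - 2 * η) * (1 + r ^ 2) ^ (-η) := by
  obtain ⟨hη₀, hη₁⟩ := hη
  have h_exp : -1 < 2 - 2 * η := by linarith
  refine ⟨(T ^ 2 + 1) ^ η / (3 - 2 * η), div_pos (by positivity) (by linarith), ?_⟩
  rintro t ⟨ht₀, htT⟩ r -
  set K := (T ^ 2 + 1) ^ η * (1 + r ^ 2) ^ (-η)
  have h_cont : Continuous fun s ↦ (sin (2 * π * s * r) / (2 * π * r)) ^ 2 := by fun_prop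
  calc ∫ s in (0 : ℝ)..t, (sin (2 * π * s * r) / (2 * π * r)) ^ 2
      ≤ ∫ s in (0 : ℝ)..t, K * s ^ (2 - 2 * η) :=
        intervalIntegral.integral_mono_on ht₀ (h_cont.intervalIntegrable 0 t)
          ((intervalIntegral.intervalIntegrable_rpow' h_exp).const_mul K)
          fun s hs ↦ sq_sin_wave_le hη₀.le hη₁.le hs.1 (hs.2.trans htT)
    _ = K * (t ^ (3 - 2 * η) / (3 - 2 * η)) := by
        rw [intervalIntegral.integral_const_mul, integral_rpow_zero_left h_exp]
        ring_nf
    _ = (T ^ 2 + 1) ^ η / (3 - 2 * η) * t ^ (3 - 2 * η) * (1 + r ^ 2) ^ (-η) := by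
        ring

/-- Pointwise-in-`ξ` estimate for the wave kernel:
`∫₀^t (sin(2πsr)/(2πr))² ds ≤ C t^{3-2η} (1 + r²)^{-η}` for `t ∈ [0,T]`, `r > 0`,
`η ∈ (0,1)`. -/
theorem wave_fourier_pointwise_bound (T : ℝ) (hT : 0 < T)
    (η : ℝ) (hη : η ∈ Set.Ioo (0 : ℝ) 1) :
    ∃ C > (0 : ℝ), ∀ t ∈ Set.Icc (0 : ℝ) T, ∀ r : ℝ, 0 < r →
      (∫ s in (0 : ℝ)..t, (Real.sin (2 * π * s * r) / (2 * π * r)) ^ 2)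
        ≤ C * t ^ (3 - 2 * η) * (1 + r ^ 2) ^ (-η) :=
  wave_fourier_pointwise_bound_general T η hη
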